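/- An integral domain D is t-sharp if and only if (a) D is pre-Krull (i.e. I_v is t-invertible for each nonzero ideal I of D), and (b) for all nonzero ideals I, A, B of D with I_v = D and I ⊇ AB, there exist nonzero ideals H and J of D such that I_t = (HJ)_t, H_t ⊇ A and J_t ⊇ B. -/

import Mathlib

/-!
(⇒) Given `0 ≠ a ∈ I`, apply `t`-sharpness to `(a) ⊇ I · aI⁻¹`. Scaling the second factor by
`a⁻¹` gives `H, J` with `(HJ)_t = D`, `I ⊆ H_t` and `I⁻¹ ⊆ J_t`; then `IJ` and `HI⁻¹` lie in
`(HJ)_v ⊆ D`, so `H ⊆ I_v`, `J ⊆ I⁻¹`, and `D = (HJ)_t ⊆ (I_v I⁻¹)_t ⊆ D`.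

(⇐) For `M = I + A`, pre-Krullness gives `I_t = (M_v · IM⁻¹)_t` and `A ⊆ M_t = (M_v · MM⁻¹)_t`,
with `(MM⁻¹)_v = D` and `B · MM⁻¹ ⊆ IM⁻¹`. Doing this for `(I, A)` and then for `(IM⁻¹, B)`
turns `I ⊇ AB` into an inclusion `J₂ ⊇ U₁U₂` with `(U₁U₂)_v = D`, hence `(J₂)_v = D`; the
factorization of `J₂` given by (b), multiplied by the two `v`-ideals, factors `I`.
-/

open scoped nonZeroDivisors

section StarSharpDefs

variable {D K : Type*} [CommRing D] [IsDomain D] [Field K] [Algebra D K] [IsFractionRing D K]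

/-- `D` is sharp with respect to the operation `star` ("`*`-sharp"): whenever
`I ⊇ A·B` for nonzero ideals `I, A, B` of `D`, there exist nonzero ideals `H, J`
with `I* = (HJ)*`, `H* ⊇ A` and `J* ⊇ B`. -/
def IsSharpOp (star : FractionalIdeal D⁰ K → FractionalIdeal D⁰ K) : Prop :=
  ∀ I A B : Ideal D, I ≠ 0 → A ≠ 0 → B ≠ 0 → A * B ≤ I →
    ∃ H J : Ideal D, H ≠ 0 ∧ J ≠ 0 ∧
      star (I : FractionalIdeal D⁰ K) =
        star ((H : FractionalIdeal D⁰ K) * (J : FractionalIdeal D⁰ K)) ∧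
      (A : FractionalIdeal D⁰ K) ≤ star (H : FractionalIdeal D⁰ K) ∧
      (B : FractionalIdeal D⁰ K) ≤ star (J : FractionalIdeal D⁰ K)

lemma inv_ne_zero' {I : FractionalIdeal D⁰ K} (hI : I ≠ 0) : I⁻¹ ≠ 0 := by
  obtain ⟨d, hd, hdI⟩ := I.isFractional
  have hmem : algebraMap D K d ∈ I⁻¹ := by
    rw [FractionalIdeal.mem_inv_iff hI]
    intro y hy
    obtain ⟨c, hc⟩ := hdI y hy
    refine ⟨c, trivial, ?_⟩
    simpa [Algebra.smul_def] using hc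
  intro h0
  rw [h0] at hmem
  have : algebraMap D K d ≠ 0 :=
    IsFractionRing.to_map_ne_zero_of_mem_nonZeroDivisors hd
  exact this (by simpa using hmem)

/-- The `v`-operation `I ↦ I_v = (I⁻¹)⁻¹`. -/
noncomputable def vOp (I : FractionalIdeal D⁰ K) : FractionalIdeal D⁰ K := (I⁻¹)⁻¹

lemma vOp_mono {I J : FractionalIdeal D⁰ K} (h : I ≤ J) : vOp I ≤ vOp J := by
  rcases eq_or_ne I 0 with rfl | hI
  · show ((0 : FractionalIdeal D⁰ K)⁻¹)⁻¹ ≤ vOp J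
    rw [FractionalIdeal.inv_zero', FractionalIdeal.inv_zero']
    exact FractionalIdeal.zero_le _
  have hJ : J ≠ 0 := fun hJ0 => hI (le_antisymm (hJ0 ▸ h) (FractionalIdeal.zero_le I))
  exact FractionalIdeal.inv_anti_mono (inv_ne_zero' hJ) (inv_ne_zero' hI)
    (FractionalIdeal.inv_anti_mono hI hJ h)

/-- The `t`-operation: `I_t` is the union of `H_v` over the finitely generated
subideals `H` of `I`. -/
noncomputable def tOp (I : FractionalIdeal D⁰ K) : FractionalIdeal D⁰ K :=
  ⟨⨆ J : {J : FractionalIdeal D⁰ K // (J : Submodule D K).FG ∧ J ≤ I},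
      ((vOp (J : FractionalIdeal D⁰ K) : FractionalIdeal D⁰ K) : Submodule D K),
    FractionalIdeal.isFractional_of_le (J := vOp I)
      (iSup_le fun J => FractionalIdeal.coe_le_coe.2 (vOp_mono J.2.2))⟩

end StarSharpDefs

open FractionalIdeal

namespace FractionalIdeal

variable {D K : Type*} [CommRing D] [Field K] [Algebra D K] [IsFractionRing D K]

lemma exists_coeIdeal_eq {X : FractionalIdeal D⁰ K} (h1 : X ≤ 1) (h0 : X ≠ 0) :
    ∃ I : Ideal D, I ≠ 0 ∧ (I : FractionalIdeal D⁰ K) = X := by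
  obtain ⟨I, rfl⟩ := le_one_iff_exists_coeIdeal.mp h1
  exact ⟨I, coeIdeal_ne_zero.mp h0, rfl⟩

lemma fg_spanSingleton (x : K) : (spanSingleton D⁰ x : Submodule D K).FG := by
  rw [coe_spanSingleton]
  exact Submodule.fg_span_singleton x

variable [IsDomain D]

instance : NoZeroDivisors (FractionalIdeal D⁰ K) where
  eq_zero_or_eq_zero_of_mul_eq_zero {X Y} hXY := by
    simp only [eq_zero_iff] at hXY ⊢
    by_contra! h
    obtain ⟨⟨x, hx, hx0⟩, ⟨y, hy, hy0⟩⟩ := h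
    exact mul_ne_zero hx0 hy0 (hXY _ (mul_mem_mul hx hy))

lemma le_inv_iff_mul_le {I J : FractionalIdeal D⁰ K} (hI : I ≠ 0) : J ≤ I⁻¹ ↔ J * I ≤ 1 :=
  le_div_iff_mul_le hI

lemma mul_inv_le_one (I : FractionalIdeal D⁰ K) : I * I⁻¹ ≤ 1 :=
  mul_one_div_le_one

end FractionalIdeal

section VOperation

variable {D K : Type*} [CommRing D] [IsDomain D] [Field K] [Algebra D K] [IsFractionRing D K]

lemma le_vOp (I : FractionalIdeal D⁰ K) : I ≤ vOp I := by
  rcases eq_or_ne I 0 with rfl | hI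
  · exact zero_le _
  · rw [vOp, le_inv_iff_mul_le (inv_ne_zero' hI)]
    exact mul_inv_le_one I

lemma vOp_ne_zero {I : FractionalIdeal D⁰ K} (hI : I ≠ 0) : vOp I ≠ 0 :=
  fun h => hI (nonpos_iff_eq_zero.mp (h ▸ le_vOp I))

lemma inv_vOp (I : FractionalIdeal D⁰ K) : (vOp I)⁻¹ = I⁻¹ := by
  rcases eq_or_ne I 0 with rfl | hI
  · simp only [vOp, inv_zero']
  · exact le_antisymm (inv_anti_mono hI (vOp_ne_zero hI) (le_vOp I)) (le_vOp I⁻¹)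

lemma vOp_vOp (I : FractionalIdeal D⁰ K) : vOp (vOp I) = vOp I :=
  congrArg Inv.inv (inv_vOp I)

lemma vOp_le_one {I : FractionalIdeal D⁰ K} (h : I ≤ 1) : vOp I ≤ 1 := by
  simpa [vOp, inv_eq] using vOp_mono h

lemma mul_vOp_le_vOp_mul (X Y : FractionalIdeal D⁰ K) : X * vOp Y ≤ vOp (X * Y) := by
  rcases eq_or_ne X 0 with rfl | hX
  · simp
  rcases eq_or_ne Y 0 with rfl | hY
  · simp [vOp, inv_zero']
  have hXY : X * (X * Y)⁻¹ ≤ Y⁻¹ := by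
    rw [le_inv_iff_mul_le hY, mul_right_comm]
    exact mul_inv_le_one _
  refine (le_inv_iff_mul_le (inv_ne_zero' (mul_ne_zero hX hY))).mpr ?_
  rw [mul_right_comm]
  exact (mul_le_mul_left hXY _).trans (mul_inv_le_one _)

lemma vOp_mul_vOp (X Y : FractionalIdeal D⁰ K) : vOp (X * vOp Y) = vOp (X * Y) :=
  le_antisymm (by simpa only [vOp_vOp] using vOp_mono (mul_vOp_le_vOp_mul X Y))
    (vOp_mono (mul_le_mul_right (le_vOp Y) X))

lemma vOp_mul_eq_one {X Y : FractionalIdeal D⁰ K} (hX : vOp X = 1) (hY : vOp Y = 1) :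
    vOp (X * Y) = 1 := by
  rw [← vOp_mul_vOp, hY, mul_one, hX]

end VOperation

section TOperation

variable {D K : Type*} [CommRing D] [IsDomain D] [Field K] [Algebra D K] [IsFractionRing D K]

lemma vOp_le_tOp {I J : FractionalIdeal D⁰ K} (hJ : (J : Submodule D K).FG) (hJI : J ≤ I) :
    vOp J ≤ tOp I :=
  coe_le_coe.mp <| le_iSup
    (fun J : {J : FractionalIdeal D⁰ K // (J : Submodule D K).FG ∧ J ≤ I} =>
      ((vOp (J : FractionalIdeal D⁰ K) : FractionalIdeal D⁰ K) : Submodule D K)) ⟨J, hJ, hJI⟩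

lemma tOp_le_of_forall_fg {I X : FractionalIdeal D⁰ K}
    (h : ∀ J : FractionalIdeal D⁰ K, (J : Submodule D K).FG → J ≤ I → vOp J ≤ X) : tOp I ≤ X :=
  coe_le_coe.mp <| iSup_le fun J => coe_le_coe.mpr (h J J.2.1 J.2.2)

lemma exists_fg_le_vOp_of_le_tOp {F I : FractionalIdeal D⁰ K} (hF : (F : Submodule D K).FG)
    (h : F ≤ tOp I) : ∃ J : FractionalIdeal D⁰ K, (J : Submodule D K).FG ∧ J ≤ I ∧ F ≤ vOp J := by
  have hdir : Directed (· ≤ ·)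
      (fun J : {J : FractionalIdeal D⁰ K // (J : Submodule D K).FG ∧ J ≤ I} =>
        ((vOp (J : FractionalIdeal D⁰ K) : FractionalIdeal D⁰ K) : Submodule D K)) := by
    rintro ⟨J₁, hJ₁, hJ₁I⟩ ⟨J₂, hJ₂, hJ₂I⟩
    refine ⟨⟨J₁ ⊔ J₂, ?_, sup_le hJ₁I hJ₂I⟩, coe_le_coe.mpr (vOp_mono le_sup_left),
      coe_le_coe.mpr (vOp_mono le_sup_right)⟩
    rw [coe_sup]
    exact hJ₁.sup hJ₂
  have : Nonempty {J : FractionalIdeal D⁰ K // (J : Submodule D K).FG ∧ J ≤ I} :=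
    ⟨⟨0, by rw [coe_zero]; exact Submodule.fg_bot, zero_le I⟩⟩
  have hc := (Submodule.fg_iff_compact _).mp hF
  rw [CompleteLattice.isCompactElement_iff_le_of_directed_sSup_le] at hc
  obtain ⟨_, ⟨J, rfl⟩, hFJ⟩ :=
    hc _ (Set.range_nonempty _) hdir.directedOn_range (by rw [sSup_range]; exact coe_le_coe.mpr h)
  exact ⟨J.1, J.2.1, J.2.2, coe_le_coe.mp hFJ⟩

lemma le_tOp (I : FractionalIdeal D⁰ K) : I ≤ tOp I := fun x hx =>
  vOp_le_tOp (fg_spanSingleton x) (spanSingleton_le_iff_mem.mpr hx)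
    (le_vOp _ (mem_spanSingleton_self D⁰ x))

lemma tOp_le_vOp (I : FractionalIdeal D⁰ K) : tOp I ≤ vOp I :=
  tOp_le_of_forall_fg fun _ _ hJI => vOp_mono hJI

lemma tOp_mono {I I' : FractionalIdeal D⁰ K} (h : I ≤ I') : tOp I ≤ tOp I' :=
  tOp_le_of_forall_fg fun _ hJ hJI => vOp_le_tOp hJ (hJI.trans h)

lemma tOp_tOp (I : FractionalIdeal D⁰ K) : tOp (tOp I) = tOp I := by
  refine le_antisymm (tOp_le_of_forall_fg fun J hJ hJI => ?_) (le_tOp _)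
  obtain ⟨J', hJ', hJ'I, hJJ'⟩ := exists_fg_le_vOp_of_le_tOp hJ hJI
  calc vOp J ≤ vOp (vOp J') := vOp_mono hJJ'
    _ = vOp J' := vOp_vOp J'
    _ ≤ tOp I := vOp_le_tOp hJ' hJ'I

lemma tOp_one : tOp (1 : FractionalIdeal D⁰ K) = 1 :=
  le_antisymm ((tOp_le_vOp 1).trans (vOp_le_one le_rfl)) (le_tOp 1)

lemma mul_tOp_le (X Y : FractionalIdeal D⁰ K) : X * tOp Y ≤ tOp (X * Y) := by
  rw [mul_le]
  intro x hx y hy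
  obtain ⟨J, hJ, hJY, hyJ⟩ :=
    exists_fg_le_vOp_of_le_tOp (fg_spanSingleton y) (spanSingleton_le_iff_mem.mpr hy)
  have hxJ : ((spanSingleton D⁰ x * J : FractionalIdeal D⁰ K) : Submodule D K).FG := by
    rw [coe_mul]
    exact (fg_spanSingleton x).mul hJ
  refine vOp_le_tOp hxJ (mul_le_mul' (spanSingleton_le_iff_mem.mpr hx) hJY)
    (mul_vOp_le_vOp_mul _ _ (mul_mem_mul (mem_spanSingleton_self D⁰ x) ?_))
  exact hyJ (mem_spanSingleton_self D⁰ y)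

lemma tOp_mul_tOp (X Y : FractionalIdeal D⁰ K) : tOp (X * tOp Y) = tOp (X * Y) :=
  le_antisymm (by simpa only [tOp_tOp] using tOp_mono (mul_tOp_le X Y))
    (tOp_mono (mul_le_mul_right (le_tOp Y) X))

lemma tOp_mul_congr {X X' : FractionalIdeal D⁰ K} (h : tOp X = tOp X') (Y : FractionalIdeal D⁰ K) :
    tOp (Y * X) = tOp (Y * X') := by
  rw [← tOp_mul_tOp, h, tOp_mul_tOp]

lemma tOp_mul_mono {X X' : FractionalIdeal D⁰ K} (h : X ≤ tOp X') (Y : FractionalIdeal D⁰ K) :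
    tOp (Y * X) ≤ tOp (Y * X') :=
  (tOp_mono (mul_le_mul_right h Y)).trans (tOp_mul_tOp Y X').le

lemma tOp_spanSingleton_mul {x : K} (hx : x ≠ 0) (X : FractionalIdeal D⁰ K) :
    tOp (spanSingleton D⁰ x * X) = spanSingleton D⁰ x * tOp X := by
  refine le_antisymm ?_ (mul_tOp_le _ _)
  calc tOp (spanSingleton D⁰ x * X)
      = spanSingleton D⁰ x * ((spanSingleton D⁰ x)⁻¹ * tOp (spanSingleton D⁰ x * X)) := by
        rw [← mul_assoc, spanSingleton_mul_inv K hx, one_mul]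
    _ ≤ spanSingleton D⁰ x * tOp ((spanSingleton D⁰ x)⁻¹ * (spanSingleton D⁰ x * X)) :=
        mul_le_mul_right (mul_tOp_le _ _) _
    _ = spanSingleton D⁰ x * tOp X := by
        rw [← mul_assoc, spanSingleton_inv_mul K hx, one_mul]

end TOperation

section PreKrull

variable {D K : Type*} [CommRing D] [IsDomain D] [Field K] [Algebra D K] [IsFractionRing D K]

def IsTInvertible (I : FractionalIdeal D⁰ K) : Prop := tOp (I * I⁻¹) = 1

variable (D K) in
def IsPreKrull : Prop := ∀ I : Ideal D, I ≠ 0 → IsTInvertible (vOp (I : FractionalIdeal D⁰ K))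

lemma IsTInvertible.tOp_eq_tOp_mul_mul_inv {M : FractionalIdeal D⁰ K} (hM : IsTInvertible M)
    (X : FractionalIdeal D⁰ K) : tOp X = tOp (M * (X * M⁻¹)) := by
  rw [← mul_left_comm, ← tOp_mul_tOp, hM, mul_one]

lemma IsTInvertible.vOp_mul_inv {M : FractionalIdeal D⁰ K} (hM : IsTInvertible M) :
    vOp (M * M⁻¹) = 1 :=
  le_antisymm (vOp_le_one (mul_inv_le_one M)) (Eq.symm hM ▸ tOp_le_vOp _)

lemma isTInvertible_vOp_of_tOp_mul_eq_one {I H J : FractionalIdeal D⁰ K} (hI : I ≠ 0)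
    (hHJ : tOp (H * J) = 1) (hIH : I ≤ tOp H) (hIJ : I⁻¹ ≤ tOp J) : IsTInvertible (vOp I) := by
  have hvHJ : vOp (H * J) ≤ 1 := vOp_le_one (hHJ ▸ le_tOp (H * J))
  have hJ : J ≤ I⁻¹ := by
    rw [le_inv_iff_mul_le hI]
    calc J * I ≤ J * vOp H := mul_le_mul_right (hIH.trans (tOp_le_vOp H)) J
      _ ≤ vOp (H * J) := mul_comm H J ▸ mul_vOp_le_vOp_mul J H
      _ ≤ 1 := hvHJ
  have hH : H ≤ vOp I := by
    rw [vOp, le_inv_iff_mul_le (inv_ne_zero' hI)]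
    calc H * I⁻¹ ≤ H * vOp J := mul_le_mul_right (hIJ.trans (tOp_le_vOp J)) H
      _ ≤ 1 := (mul_vOp_le_vOp_mul H J).trans hvHJ
  refine le_antisymm ((tOp_mono (mul_inv_le_one _)).trans tOp_one.le) ?_
  calc 1 = tOp (H * J) := hHJ.symm
    _ ≤ tOp (vOp I * (vOp I)⁻¹) := tOp_mono (inv_vOp I ▸ mul_le_mul' hH hJ)

theorem IsSharpOp.isPreKrull (h : IsSharpOp (D := D) (K := K) tOp) : IsPreKrull D K := by
  intro I hI
  obtain ⟨a, haI, ha⟩ := Submodule.exists_mem_ne_zero_of_ne_bot hI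
  have hx : algebraMap D K a ≠ 0 := (map_ne_zero_iff _ (IsFractionRing.injective D K)).mpr ha
  set s := spanSingleton D⁰ (algebraMap D K a)
  have hI' : (I : FractionalIdeal D⁰ K) ≠ 0 := coeIdeal_ne_zero.mpr hI
  have hsI : s ≤ I := spanSingleton_le_iff_mem.mpr (mem_coeIdeal_of_mem D⁰ haI)
  have hsIinv : s * (I : FractionalIdeal D⁰ K)⁻¹ ≤ 1 :=
    (mul_le_mul_left hsI _).trans (mul_inv_le_one _)
  obtain ⟨B, hB, hBs⟩ := exists_coeIdeal_eq hsIinv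
    (mul_ne_zero (spanSingleton_ne_zero_iff.mpr hx) (inv_ne_zero' hI'))
  have hIB : I * B ≤ Ideal.span {a} := by
    rw [← coeIdeal_le_coeIdeal K, coeIdeal_mul, hBs, coeIdeal_span_singleton, mul_left_comm]
    exact (mul_le_mul_right (mul_inv_le_one _) s).trans (mul_one s).le
  obtain ⟨H, J, -, -, hsHJ, hIH, hBJ⟩ :=
    h _ I B (by simpa [Submodule.zero_eq_bot] using ha) hI hB hIB
  have hs : tOp s = s := by simpa [tOp_one] using tOp_spanSingleton_mul (D := D) hx 1
  refine isTInvertible_vOp_of_tOp_mul_eq_one (J := s⁻¹ * (J : FractionalIdeal D⁰ K)) hI' ?_ hIH ?_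
  · rw [mul_left_comm, spanSingleton_inv, tOp_spanSingleton_mul (inv_ne_zero hx), ← hsHJ,
      coeIdeal_span_singleton, hs, ← spanSingleton_inv, spanSingleton_inv_mul K hx]
  · calc (I : FractionalIdeal D⁰ K)⁻¹ = s⁻¹ * (s * (I : FractionalIdeal D⁰ K)⁻¹) := by
          rw [← mul_assoc, spanSingleton_inv_mul K hx, one_mul]
      _ ≤ s⁻¹ * tOp J := mul_le_mul_right (hBs ▸ hBJ) _
      _ ≤ tOp (s⁻¹ * (J : FractionalIdeal D⁰ K)) := mul_tOp_le _ _

-- The witnesses are `V = (I + A)_v`, `J = I (I + A)⁻¹` and `U = (I + A)(I + A)⁻¹`.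
theorem IsPreKrull.exists_factor_through_sup (hD : IsPreKrull D K) {I : Ideal D} (hI : I ≠ 0)
    (A : Ideal D) :
    ∃ V J U : Ideal D, V ≠ 0 ∧ J ≠ 0 ∧ U ≠ 0 ∧ vOp (U : FractionalIdeal D⁰ K) = 1 ∧
      tOp (I : FractionalIdeal D⁰ K) =
        tOp ((V : FractionalIdeal D⁰ K) * (J : FractionalIdeal D⁰ K)) ∧
      (A : FractionalIdeal D⁰ K) ≤ tOp ((V : FractionalIdeal D⁰ K) * (U : FractionalIdeal D⁰ K)) ∧
      ∀ C : Ideal D, A * C ≤ I → U * C ≤ J := by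
  set M := I ⊔ A
  have hM : (M : FractionalIdeal D⁰ K) ≠ 0 :=
    coeIdeal_ne_zero.mpr fun h => hI (le_bot_iff.mp (h ▸ le_sup_left))
  have hMinv := hD M (coeIdeal_ne_zero.mp hM)
  have hIM : (I : FractionalIdeal D⁰ K) ≤ M := coeIdeal_le_coeIdeal K |>.mpr le_sup_left
  obtain ⟨V, hV, hVM⟩ := exists_coeIdeal_eq (vOp_le_one coeIdeal_le_one) (vOp_ne_zero hM)
  obtain ⟨J, hJ, hJM⟩ := exists_coeIdeal_eq ((mul_le_mul_left hIM _).trans (mul_inv_le_one _))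
    (mul_ne_zero (coeIdeal_ne_zero.mpr hI) (inv_ne_zero' hM))
  obtain ⟨U, hU, hUM⟩ := exists_coeIdeal_eq (mul_inv_le_one _)
    (mul_ne_zero hM (inv_ne_zero' hM))
  refine ⟨V, J, U, hV, hJ, hU, ?_, ?_, ?_, ?_⟩
  · rw [hUM, ← hMinv.vOp_mul_inv, inv_vOp, mul_comm (vOp _), vOp_mul_vOp, mul_comm]
  · rw [hVM, hJM, ← inv_vOp (M : FractionalIdeal D⁰ K)]
    exact hMinv.tOp_eq_tOp_mul_mul_inv _
  · calc (A : FractionalIdeal D⁰ K) ≤ M := coeIdeal_le_coeIdeal K |>.mpr le_sup_right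
      _ ≤ tOp M := le_tOp _
      _ = tOp ((V : FractionalIdeal D⁰ K) * (U : FractionalIdeal D⁰ K)) := by
          rw [hVM, hUM, ← inv_vOp (M : FractionalIdeal D⁰ K)]
          exact hMinv.tOp_eq_tOp_mul_mul_inv _
  · intro C hAC
    have hMC : M * C ≤ I := by
      rw [Ideal.sup_mul]
      exact sup_le Ideal.mul_le_left hAC
    rw [← coeIdeal_le_coeIdeal K, coeIdeal_mul, hUM, hJM, mul_right_comm, ← coeIdeal_mul]
    exact mul_le_mul_left ((coeIdeal_le_coeIdeal K).mpr hMC) _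

theorem IsPreKrull.isSharpOp_tOp (hD : IsPreKrull D K)
    (h : ∀ I A B : Ideal D, I ≠ 0 → A ≠ 0 → B ≠ 0 →
      vOp (I : FractionalIdeal D⁰ K) = 1 → A * B ≤ I →
      ∃ H J : Ideal D, H ≠ 0 ∧ J ≠ 0 ∧
        tOp (I : FractionalIdeal D⁰ K) =
          tOp ((H : FractionalIdeal D⁰ K) * (J : FractionalIdeal D⁰ K)) ∧
        (A : FractionalIdeal D⁰ K) ≤ tOp (H : FractionalIdeal D⁰ K) ∧
        (B : FractionalIdeal D⁰ K) ≤ tOp (J : FractionalIdeal D⁰ K)) :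
    IsSharpOp (D := D) (K := K) tOp := by
  intro I A B hI hA hB hAB
  obtain ⟨V₁, J₁, U₁, hV₁, hJ₁, hU₁, hvU₁, hIJ₁, hAU₁, hU₁C⟩ := hD.exists_factor_through_sup hI A
  obtain ⟨V₂, J₂, U₂, hV₂, hJ₂, hU₂, hvU₂, hJ₁J₂, hBU₂, hU₂C⟩ :=
    hD.exists_factor_through_sup hJ₁ B
  have hUJ₂ : U₁ * U₂ ≤ J₂ := mul_comm U₂ U₁ ▸ hU₂C U₁ (mul_comm U₁ B ▸ hU₁C B hAB)
  have hvJ₂ : vOp (J₂ : FractionalIdeal D⁰ K) = 1 := by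
    refine le_antisymm (vOp_le_one coeIdeal_le_one) ?_
    rw [← vOp_mul_eq_one hvU₁ hvU₂, ← coeIdeal_mul]
    exact vOp_mono ((coeIdeal_le_coeIdeal K).mpr hUJ₂)
  obtain ⟨X, Y, hX, hY, hJ₂XY, hU₁X, hU₂Y⟩ := h J₂ U₁ U₂ hJ₂ hU₁ hU₂ hvJ₂ hUJ₂
  refine ⟨V₁ * X, V₂ * Y, mul_ne_zero hV₁ hX, mul_ne_zero hV₂ hY, ?_, ?_, ?_⟩
  · rw [coeIdeal_mul, coeIdeal_mul, hIJ₁, tOp_mul_congr hJ₁J₂, ← mul_assoc,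
      tOp_mul_congr hJ₂XY, mul_mul_mul_comm]
  · rw [coeIdeal_mul]
    exact hAU₁.trans (tOp_mul_mono hU₁X _)
  · rw [coeIdeal_mul]
    exact hBU₂.trans (tOp_mul_mono hU₂Y _)

end PreKrull

/-- A domain `D` is `t`-sharp if and only if (a) `D` is pre-Krull
(`I_v` is `t`-invertible for each nonzero ideal `I`), and (b) for all nonzero ideals
`I, A, B` with `I_v = D` and `I ⊇ AB`, there exist nonzero ideals `H, J` such that
`I_t = (HJ)_t`, `H_t ⊇ A` and `J_t ⊇ B`. -/
theorem statement15 (D : Type*) [CommRing D] [IsDomain D]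
    (K : Type*) [Field K] [Algebra D K] [IsFractionRing D K] :
    IsSharpOp (D := D) (K := K) tOp ↔
      ((∀ I : Ideal D, I ≠ 0 →
          tOp (vOp (I : FractionalIdeal D⁰ K) * (vOp (I : FractionalIdeal D⁰ K))⁻¹) = 1) ∧
        (∀ I A B : Ideal D, I ≠ 0 → A ≠ 0 → B ≠ 0 →
          vOp (I : FractionalIdeal D⁰ K) = 1 → A * B ≤ I →
          ∃ H J : Ideal D, H ≠ 0 ∧ J ≠ 0 ∧
            tOp (I : FractionalIdeal D⁰ K) =
              tOp ((H : FractionalIdeal D⁰ K) * (J : FractionalIdeal D⁰ K)) ∧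
            (A : FractionalIdeal D⁰ K) ≤ tOp (H : FractionalIdeal D⁰ K) ∧
            (B : FractionalIdeal D⁰ K) ≤ tOp (J : FractionalIdeal D⁰ K))) :=
  ⟨fun h => ⟨h.isPreKrull, fun I A B hI hA hB _ hAB => h I A B hI hA hB hAB⟩,
    fun ⟨hD, hb⟩ => IsPreKrull.isSharpOp_tOp hD hb⟩
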